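/- Perfect matchings of {1,2,...,2n} are in bijection with oscillating tableaux of length 2n, i.e., sequences (∅ = μ^0, μ^1, ..., μ^{2n} = ∅) of integer partitions in which consecutive partitions differ by exactly one square. -/

import Mathlib

/-- `μ` and `ν` differ by exactly one square: one is obtained from the other by
adding a single box. -/
def OneBoxStep (μ ν : YoungDiagram) : Prop :=
  (μ ≤ ν ∧ ν.card = μ.card + 1) ∨ (ν ≤ μ ∧ μ.card = ν.card + 1)

/-- An oscillating tableau of length `2n`: a sequence
`(∅ = μ⁰, μ¹, …, μ^{2n} = ∅)` of partitions in which consecutive partitions differ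
by exactly one square. -/
def IsOscillating (n : ℕ) (mu : Fin (2 * n + 1) → YoungDiagram) : Prop :=
  mu 0 = ⊥ ∧ mu (Fin.last (2 * n)) = ⊥ ∧
  ∀ i : ℕ, (h : i < 2 * n) →
    OneBoxStep (mu ⟨i, by omega⟩) (mu ⟨i + 1, by omega⟩)

/-!
Both sides have `(2n - 1)‼` elements. For perfect matchings, the block containing a fixed
element `a` is `{a, b}` for one of `2n - 1` choices of `b`, and removing it leaves a perfect
matching of the remaining `2n - 2` elements.

Oscillating tableaux are walks from `∅` to `∅` in the Hasse diagram of Young's lattice. Every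
diagram has one more addable than removable corner, and since the lattice is modular, two
distinct diagrams `μ`, `ν` have a common upper cover (necessarily `μ ⊔ ν`) iff they have a common
lower cover (`μ ⊓ ν`). Hence the up and down operators `U`, `D` satisfy `DU = UD + 1`. Writing
`w m μ` for the number of walks of length `m` from `∅` to `μ`, this gives
`∑_{ν ⋗ μ} w (m + 1) ν = (m + 1) w m μ` by induction on `m`, so `w (2n + 2) ∅ = (2n + 1) w (2n) ∅`.
-/

open Finset
open scoped Nat

lemma IsLowerSet.insert_of_forall_lt {α : Type*} [PartialOrder α] {s : Set α}
    (hs : IsLowerSet s) {c : α} (hc : ∀ d < c, d ∈ s) : IsLowerSet (insert c s) := by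
  rintro e d hde (rfl | he)
  · obtain rfl | hlt := hde.eq_or_lt
    · exact Set.mem_insert _ _
    · exact Set.mem_insert_of_mem _ (hc d hlt)
  · exact Set.mem_insert_of_mem _ (hs hde he)

lemma IsLowerSet.diff_singleton_of_forall_not_lt {α : Type*} [PartialOrder α] {s : Set α}
    (hs : IsLowerSet s) {c : α} (hc : ∀ e ∈ s, ¬c < e) : IsLowerSet (s \ {c}) := by
  rintro e d hde ⟨he, hec⟩
  refine ⟨hs hde he, ?_⟩
  rintro rfl
  exact hc e he (hde.lt_of_ne (Ne.symm hec))

lemma Finset.card_eq_ite_of_subset_singleton {α : Type*} [DecidableEq α] {s : Finset α} {a : α}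
    (h : s ⊆ {a}) : #s = if a ∈ s then 1 else 0 := by
  rcases subset_singleton_iff.1 h with rfl | rfl <;> simp

theorem card_inter_eq_card_inter_of_covBy {α : Type*} [Lattice α] [IsModularLattice α]
    [DecidableEq α] {U D : α → Finset α} (hU : ∀ x y, y ∈ U x ↔ x ⋖ y)
    (hD : ∀ x y, y ∈ D x ↔ y ⋖ x) {x y : α} (hxy : x ≠ y) :
    #(U x ∩ U y) = #(D x ∩ D y) := by
  have hup : U x ∩ U y ⊆ {x ⊔ y} := fun z hz => by
    rw [mem_inter, hU, hU] at hz
    exact mem_singleton.2 (hz.1.wcovBy.sup_eq hz.2.wcovBy hxy).symm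
  have hdown : D x ∩ D y ⊆ {x ⊓ y} := fun z hz => by
    rw [mem_inter, hD, hD] at hz
    exact mem_singleton.2 (hz.1.wcovBy.inf_eq hz.2.wcovBy hxy).symm
  have hiff : x ⊔ y ∈ U x ∩ U y ↔ x ⊓ y ∈ D x ∩ D y := by
    simp only [mem_inter, hU, hD]
    exact ⟨fun h => ⟨inf_covBy_of_covBy_sup_of_covBy_sup_left h.1 h.2,
        inf_covBy_of_covBy_sup_of_covBy_sup_right h.1 h.2⟩,
      fun h => ⟨covBy_sup_of_inf_covBy_of_inf_covBy_left h.1 h.2,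
        covBy_sup_of_inf_covBy_of_inf_covBy_right h.1 h.2⟩⟩
  rw [card_eq_ite_of_subset_singleton hup, card_eq_ite_of_subset_singleton hdown]
  exact if_congr hiff rfl rfl

section UpDown

variable {α M : Type*} [DecidableEq α] [AddCommMonoid M]

lemma Finset.sum_sum_eq_sum_card_inter_smul {A S : Finset α} {T V : α → Finset α}
    (hTV : ∀ y z, z ∈ T y ↔ y ∈ V z) (hS : ∀ y ∈ A, T y ⊆ S) (g : α → M) :
    ∑ y ∈ A, ∑ z ∈ T y, g z = ∑ z ∈ S, #(A ∩ V z) • g z := calc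
  ∑ y ∈ A, ∑ z ∈ T y, g z = ∑ y ∈ A, ∑ z ∈ S, if z ∈ T y then g z else 0 :=
    sum_congr rfl fun y hy => by rw [sum_ite_mem, inter_eq_right.2 (hS y hy)]
  _ = ∑ z ∈ S, ∑ y ∈ A, if z ∈ T y then g z else 0 := sum_comm
  _ = ∑ z ∈ S, #(A ∩ V z) • g z := sum_congr rfl fun z _ => by
    rw [← sum_filter, sum_const]
    congr 2
    ext y
    rw [mem_filter, mem_inter, hTV]

/-- `DU = UD + 1` for the up and down operators of a 1-differential poset in Stanley's sense. -/
theorem sum_sum_down_eq_sum_sum_up_add {U D : α → Finset α} (hUD : ∀ x y, y ∈ U x ↔ x ∈ D y)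
    (hcard : ∀ x, #(U x) = #(D x) + 1)
    (hinter : ∀ x y, x ≠ y → #(U x ∩ U y) = #(D x ∩ D y)) (g : α → M) (x : α) :
    ∑ y ∈ U x, ∑ z ∈ D y, g z = ∑ y ∈ D x, ∑ z ∈ U y, g z + g x := by
  set S := insert x ((U x).biUnion D ∪ (D x).biUnion U)
  have hpoint : ∀ z, #(U x ∩ U z) • g z = #(D x ∩ D z) • g z + if z = x then g z else 0 := by
    intro z
    split_ifs with h
    · rw [h, inter_self, inter_self, hcard, add_smul, one_smul]
    · rw [hinter x z (Ne.symm h), add_zero]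
  rw [sum_sum_eq_sum_card_inter_smul (S := S) (fun y z => (hUD z y).symm)
      fun y hy => ((subset_biUnion_of_mem D hy).trans subset_union_left).trans (subset_insert _ _),
    sum_sum_eq_sum_card_inter_smul (S := S) (fun y z => hUD y z)
      fun y hy => ((subset_biUnion_of_mem U hy).trans subset_union_right).trans (subset_insert _ _),
    sum_congr rfl fun z _ => hpoint z, sum_add_distrib, sum_ite_eq' S x g,
    if_pos (mem_insert_self _ _)]

end UpDown

section Walks

variable {α : Type*} {r : α → α → Prop} {N : α → Finset α} {a b c : α} {m : ℕ}

def IsWalk (r : α → α → Prop) (a b : α) {m : ℕ} (f : Fin (m + 1) → α) : Prop :=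
  f 0 = a ∧ f (Fin.last m) = b ∧ ∀ i : Fin m, r (f i.castSucc) (f i.succ)

def walkCount [DecidableEq α] (N : α → Finset α) (a : α) : ℕ → α → ℕ
  | 0, b => if b = a then 1 else 0
  | m + 1, b => ∑ c ∈ N b, walkCount N a m c

def walkInitEquiv (hcb : r c b) :
    {f : {f : Fin (m + 2) → α // IsWalk r a b f} // f.1 (Fin.last m).castSucc = c} ≃
      {g : Fin (m + 1) → α // IsWalk r a c g} where
  toFun f := ⟨Fin.init f.1.1, f.1.2.1, f.2, fun i => by
    simpa only [Fin.init, Fin.succ_castSucc] using f.1.2.2.2 i.castSucc⟩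
  invFun g := ⟨⟨Fin.snoc g.1 b, by
    refine ⟨?_, Fin.snoc_last _ _, Fin.lastCases ?_ fun i => ?_⟩
    · exact (Fin.snoc_castSucc (α := fun _ => α) _ _ 0).trans g.2.1
    · rwa [Fin.succ_last, Fin.snoc_last, Fin.snoc_castSucc, g.2.2.1]
    · simpa only [Fin.succ_castSucc, Fin.snoc_castSucc] using g.2.2.2 i⟩,
    (Fin.snoc_castSucc (α := fun _ => α) _ _ _).trans g.2.2.1⟩
  left_inv f := by
    ext : 2
    simpa only [f.1.2.2.1] using Fin.snoc_init_self f.1.1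
  right_inv g := Subtype.ext (Fin.init_snoc (α := fun _ => α) _ _)

theorem nonempty_walk_equiv_fin [DecidableEq α] (hN : ∀ b c, c ∈ N b ↔ r c b) (a : α) (m : ℕ)
    (b : α) : Nonempty ({f : Fin (m + 1) → α // IsWalk r a b f} ≃ Fin (walkCount N a m b)) := by
  induction m generalizing b with
  | zero =>
    by_cases hb : b = a
    · subst hb
      have : Unique {f : Fin 1 → α // IsWalk r b b f} :=
        ⟨⟨⟨fun _ => b, rfl, rfl, Fin.elim0⟩⟩, fun f =>
          Subtype.ext (funext fun i => Fin.fin_one_eq_zero i ▸ f.2.1)⟩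
      rw [walkCount, if_pos rfl]
      exact ⟨Equiv.ofUnique _ _⟩
    · have : IsEmpty {f : Fin 1 → α // IsWalk r a b f} :=
        ⟨fun f => hb (f.2.2.1.symm.trans f.2.1)⟩
      rw [walkCount, if_neg hb]
      exact ⟨Equiv.equivOfIsEmpty _ _⟩
  | succ m ih =>
    let penultimate : {f : Fin (m + 2) → α // IsWalk r a b f} → N b := fun f =>
      ⟨f.1 (Fin.last m).castSucc,
        (hN _ _).2 (by simpa only [Fin.succ_last, f.2.2.1] using f.2.2.2 (Fin.last m))⟩
    have hcard : Fintype.card (Σ c : N b, Fin (walkCount N a m c)) = walkCount N a (m + 1) b := by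
      rw [Fintype.card_sigma, walkCount, ← sum_coe_sort (N b)]
      simp only [Fintype.card_fin]
    exact ⟨(Equiv.sigmaFiberEquiv penultimate).symm.trans <|
      (Equiv.sigmaCongrRight fun c : N b =>
        (Equiv.subtypeEquivRight fun _ => Subtype.ext_iff).trans <|
          (walkInitEquiv ((hN _ _).1 c.2)).trans (ih c).some).trans
        (Fintype.equivFinOfCardEq hcard)⟩

end Walks

lemma Finpartition.parts_avoid_of_mem {α : Type*} [GeneralizedBooleanAlgebra α] [DecidableEq α]
    {a t : α} (P : Finpartition a) (ht : t ∈ P.parts) : (P.avoid t).parts = P.parts.erase t := by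
  ext d
  rw [mem_avoid, mem_erase]
  constructor
  · rintro ⟨e, he, het, rfl⟩
    have hne : e ≠ t := fun h => het h.le
    have hdisj : Disjoint e t := P.disjoint he ht hne
    rw [hdisj.sdiff_eq_left]
    exact ⟨hne, he⟩
  · rintro ⟨hne, hd⟩
    have hdisj : Disjoint d t := P.disjoint hd ht hne
    exact ⟨d, hd, fun hle => P.ne_bot hd (hdisj.eq_bot_of_le hle), hdisj.sdiff_eq_left⟩

section PerfectMatching

variable {α : Type*} [DecidableEq α] {s t : Finset α} {a : α}

lemma Finpartition.mem_parts_of_part_eq {P : Finpartition s} (ha : a ∈ s) (h : P.part a = t) :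
    t ∈ P.parts :=
  h ▸ P.part_mem.2 ha

abbrev PerfectMatching (s : Finset α) : Type _ := {P : Finpartition s // ∀ t ∈ P.parts, #t = 2}

def PerfectMatching.equivOfPartEq (ha : a ∈ t) (hts : t ⊆ s) (ht : #t = 2) :
    {P : PerfectMatching s // P.1.part a = t} ≃ PerfectMatching (s \ t) where
  toFun P := ⟨P.1.1.avoid t, fun u hu => by
    rw [Finpartition.parts_avoid_of_mem _ (P.1.1.mem_parts_of_part_eq (hts ha) P.2)] at hu
    exact P.1.2 u (mem_of_mem_erase hu)⟩
  invFun Q := ⟨⟨Q.1.extend (by rintro rfl; simp at ht) disjoint_sdiff_self_left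
      (sdiff_sup_cancel hts), fun u hu => by
        rw [Finpartition.extend_parts, mem_insert] at hu
        exact hu.elim (· ▸ ht) (Q.2 u)⟩,
    Finpartition.part_eq_of_mem _ (mem_insert_self _ _) ha⟩
  left_inv P := by
    have hmem := P.1.1.mem_parts_of_part_eq (hts ha) P.2
    ext : 2
    apply Finpartition.ext
    rw [Finpartition.extend_parts, Finpartition.parts_avoid_of_mem _ hmem, insert_erase hmem]
  right_inv Q := by
    ext : 1
    apply Finpartition.ext
    rw [Finpartition.parts_avoid_of_mem _ (mem_insert_self _ _), Finpartition.extend_parts,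
      erase_insert fun h => ?_]
    obtain ⟨b, hb⟩ := card_pos.1 (ht ▸ two_pos : 0 < #t)
    exact (mem_sdiff.1 (Q.1.le h hb)).2 hb

lemma card_powerset_filter_mem_card_eq_two (ha : a ∈ s) :
    #{t ∈ s.powerset | a ∈ t ∧ #t = 2} = #s - 1 := calc
  _ = #(powersetCard 1 (s.erase a)) := by
    refine card_nbij' (·.erase a) (insert a) (fun t ht => ?_) (fun u hu => ?_)
      (fun t ht => insert_erase (mem_filter.1 (mem_coe.1 ht)).2.1)
      (fun u hu => erase_insert (subset_erase.1 (mem_powersetCard.1 (mem_coe.1 hu)).1).2)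
    · rw [mem_coe, mem_filter, mem_powerset] at ht
      rw [mem_coe, mem_powersetCard, card_erase_of_mem ht.2.1, ht.2.2]
      exact ⟨erase_subset_erase a ht.1, rfl⟩
    · rw [mem_coe, mem_powersetCard, subset_erase] at hu
      rw [mem_coe, mem_filter, mem_powerset, card_insert_of_notMem hu.1.2, hu.2]
      exact ⟨insert_subset ha hu.1.1, mem_insert_self a u, rfl⟩
  _ = #s - 1 := by rw [card_powersetCard, Nat.choose_one_right, card_erase_of_mem ha]

theorem card_perfectMatching {n : ℕ} (hs : #s = 2 * n) :
    Nat.card (PerfectMatching s) = (2 * n - 1)‼ := by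
  induction n generalizing s with
  | zero =>
    rw [mul_zero, Finset.card_eq_zero] at hs
    subst hs
    have : Subsingleton (Finpartition (∅ : Finset α)) :=
      inferInstanceAs (Subsingleton (Finpartition ⊥))
    exact Nat.card_eq_one_iff_exists.2 ⟨⟨⊥, by simp⟩, fun P => Subtype.ext (Subsingleton.elim _ _)⟩
  | succ n ih =>
    obtain ⟨a, ha⟩ := card_pos.1 (by omega : 0 < #s)
    let pairs := {t ∈ s.powerset | a ∈ t ∧ #t = 2}
    let partOf : PerfectMatching s → pairs := fun P => ⟨P.1.part a, mem_filter.2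
      ⟨mem_powerset.2 (P.1.part_subset a), P.1.mem_part_self.2 ha, P.2 _ (P.1.part_mem.2 ha)⟩⟩
    have hfiber : ∀ t : pairs, Nat.card {P // partOf P = t} = (2 * n - 1)‼ := fun t => by
      obtain ⟨hts, hat, ht⟩ := by simpa only [pairs, mem_filter, mem_powerset] using t.2
      rw [Nat.card_congr ((Equiv.subtypeEquivRight fun _ => Subtype.ext_iff).trans
        (PerfectMatching.equivOfPartEq hat hts ht))]
      exact ih (by rw [card_sdiff_of_subset hts, hs, ht]; omega)
    rw [Nat.card_congr (Equiv.sigmaFiberEquiv partOf).symm, Nat.card_sigma,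
      sum_congr rfl fun t _ => hfiber t, sum_const, card_univ, Fintype.card_coe,
      card_powerset_filter_mem_card_eq_two ha, hs, smul_eq_mul,
      show 2 * (n + 1) = 2 * n + 1 + 1 by ring, Nat.add_sub_cancel, Nat.doubleFactorial_add_one]

end PerfectMatching

namespace YoungDiagram

instance : DecidableEq YoungDiagram := fun _ _ => decidable_of_iff _ YoungDiagram.ext_iff.symm

variable {μ ν : YoungDiagram} {i j : ℕ}

def insertCell (μ : YoungDiagram) (c : ℕ × ℕ) (hc : ∀ d < c, d ∈ μ) : YoungDiagram :=
  ⟨insert c μ.cells, by simpa using μ.isLowerSet.insert_of_forall_lt hc⟩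

def eraseCell (μ : YoungDiagram) (c : ℕ × ℕ) (hc : ∀ d ∈ μ, ¬c < d) : YoungDiagram :=
  ⟨μ.cells.erase c, by simpa using μ.isLowerSet.diff_singleton_of_forall_not_lt hc⟩

lemma card_lt_card (h : μ < ν) : μ.card < ν.card :=
  Finset.card_lt_card (cells_ssubset_iff.2 h)

theorem covBy_iff : μ ⋖ ν ↔ μ ≤ ν ∧ ν.card = μ.card + 1 := by
  constructor
  · intro h
    obtain ⟨c, hc, hmin⟩ := Finset.exists_minimal
      (sdiff_nonempty.2 fun hsub => h.lt.not_ge (cells_subset_iff.1 hsub))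
    rw [mem_sdiff, mem_cells, mem_cells] at hc
    have hlt : ∀ d < c, d ∈ μ := fun d hd => by
      by_contra hdμ
      exact hd.not_ge (hmin (mem_sdiff.2 ⟨ν.isLowerSet hd.le hc.1, hdμ⟩) hd.le)
    have hκ : μ.insertCell c hlt = ν := by
      refine ((cells_subset_iff.1 ?_).lt_or_eq).resolve_left fun hκν => h.2 ?_ hκν
      · exact insert_subset ((mem_cells _).2 hc.1) (cells_subset_iff.2 h.le)
      · refine lt_of_le_of_ne (cells_subset_iff.1 (subset_insert _ _)) fun he => hc.2 ?_
        rw [he, ← mem_cells]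
        exact mem_insert_self c μ.cells
    subst hκ
    exact ⟨h.le, card_insert_of_notMem ((mem_cells c).not.2 hc.2)⟩
  · rintro ⟨hle, hcard⟩
    refine ⟨hle.lt_of_ne (by rintro rfl; omega), fun κ hμκ hκν => ?_⟩
    have := card_lt_card hμκ
    have := card_lt_card hκν
    omega

lemma exists_cells_eq_insert_of_covBy (h : μ ⋖ ν) : ∃ c ∉ μ, ν.cells = insert c μ.cells := by
  obtain ⟨hle, hcard⟩ := covBy_iff.1 h
  obtain ⟨c, hc, hins⟩ := exists_eq_insert_iff.2 ⟨cells_subset_iff.2 hle, hcard.symm⟩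
  exact ⟨c, fun h => hc ((mem_cells c).2 h), hins.symm⟩

lemma rowLen_pos_iff : 0 < μ.rowLen i ↔ i < μ.colLen 0 := by
  rw [← mem_iff_lt_rowLen, mem_iff_lt_colLen]

def removableRows (μ : YoungDiagram) : Finset ℕ :=
  {i ∈ range (μ.colLen 0) | μ.rowLen (i + 1) < μ.rowLen i}

/-- Row `i` can take a box at its end iff `i = 0` or row `i - 1` is removable. -/
def addableRows (μ : YoungDiagram) : Finset ℕ :=
  insert 0 ((removableRows μ).image (· + 1))

lemma mem_removableRows : i ∈ removableRows μ ↔ μ.rowLen (i + 1) < μ.rowLen i := by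
  rw [removableRows, mem_filter, mem_range, and_iff_right_iff_imp, ← rowLen_pos_iff]
  omega

lemma mem_addableRows : i ∈ addableRows μ ↔ i = 0 ∨ μ.rowLen i < μ.rowLen (i - 1) := by
  cases i <;> simp [addableRows, mem_removableRows]

lemma card_addableRows (μ : YoungDiagram) : #(addableRows μ) = #(removableRows μ) + 1 := by
  rw [addableRows, card_insert_of_notMem (by simp),
    card_image_of_injective _ (add_left_injective 1)]

lemma mem_of_lt_addable (hi : i ∈ addableRows μ) {d : ℕ × ℕ} (hd : d < (i, μ.rowLen i)) :
    d ∈ μ := by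
  obtain ⟨d₁, d₂⟩ := d
  rw [mem_iff_lt_rowLen]
  rw [mem_addableRows] at hi
  rcases Prod.mk_lt_mk.1 hd with ⟨h₁, h₂⟩ | ⟨h₁, h₂⟩
  · have := μ.rowLen_anti d₁ (i - 1) (by omega)
    omega
  · have := μ.rowLen_anti d₁ i h₁
    omega

lemma not_lt_of_removable (hi : i ∈ removableRows μ) {d : ℕ × ℕ} (hd : d ∈ μ) :
    ¬(i, μ.rowLen i - 1) < d := by
  obtain ⟨d₁, d₂⟩ := d
  rw [mem_iff_lt_rowLen] at hd
  rw [mem_removableRows] at hi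
  intro h
  rcases Prod.mk_lt_mk.1 h with ⟨h₁, h₂⟩ | ⟨h₁, h₂⟩
  · have := μ.rowLen_anti (i + 1) d₁ h₁
    omega
  · have := μ.rowLen_anti i d₁ h₁
    omega

def addBox (μ : YoungDiagram) (i : ℕ) : YoungDiagram :=
  if hi : i ∈ addableRows μ then μ.insertCell _ fun _ => mem_of_lt_addable hi else μ

def removeBox (μ : YoungDiagram) (i : ℕ) : YoungDiagram :=
  if hi : i ∈ removableRows μ then μ.eraseCell _ fun _ => not_lt_of_removable hi else μ

lemma cells_addBox (hi : i ∈ addableRows μ) :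
    (addBox μ i).cells = insert (i, μ.rowLen i) μ.cells := by
  rw [addBox, dif_pos hi, insertCell]

lemma cells_removeBox (hi : i ∈ removableRows μ) :
    (removeBox μ i).cells = μ.cells.erase (i, μ.rowLen i - 1) := by
  rw [removeBox, dif_pos hi, eraseCell]

lemma mk_rowLen_notMem (μ : YoungDiagram) (i : ℕ) : (i, μ.rowLen i) ∉ μ.cells := fun h =>
  (mem_iff_lt_rowLen.1 ((mem_cells _).1 h)).false

lemma mk_rowLen_sub_one_mem (hi : i ∈ removableRows μ) : (i, μ.rowLen i - 1) ∈ μ.cells := by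
  rw [mem_cells, mem_iff_lt_rowLen]
  have := mem_removableRows.1 hi
  omega

lemma covBy_addBox (hi : i ∈ addableRows μ) : μ ⋖ addBox μ i := by
  refine covBy_iff.2 ⟨cells_subset_iff.1 ?_, ?_⟩ <;>
    simp only [YoungDiagram.card, cells_addBox hi]
  · exact subset_insert _ _
  · exact card_insert_of_notMem (mk_rowLen_notMem μ i)

lemma removeBox_covBy (hi : i ∈ removableRows μ) : removeBox μ i ⋖ μ := by
  have hmem := mk_rowLen_sub_one_mem hi
  refine covBy_iff.2 ⟨cells_subset_iff.1 ?_, ?_⟩ <;>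
    simp only [YoungDiagram.card, cells_removeBox hi]
  · exact erase_subset _ _
  · exact (card_erase_add_one hmem).symm

lemma addable_of_cells_eq_insert (hc : (i, j) ∉ μ) (h : ν.cells = insert (i, j) μ.cells) :
    i ∈ addableRows μ ∧ j = μ.rowLen i := by
  have hν : (i, j) ∈ ν := (mem_cells _).1 (h ▸ mem_insert_self _ _)
  have hlt : ∀ d < (i, j), d ∈ μ := fun d hd => by
    have hdν : d ∈ ν.cells := (mem_cells d).2 (ν.isLowerSet hd.le hν)
    rw [h, mem_insert] at hdν
    exact (mem_cells d).1 (hdν.resolve_left hd.ne)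
  have hj : j = μ.rowLen i := by
    have hle : μ.rowLen i ≤ j := not_lt.1 fun h => hc (mem_iff_lt_rowLen.2 h)
    refine le_antisymm (not_lt.1 fun h => ?_) hle
    simpa using mem_iff_lt_rowLen.1 (hlt (i, μ.rowLen i) (Prod.mk_lt_mk.2 (.inr ⟨le_rfl, h⟩)))
  refine ⟨mem_addableRows.2 ?_, hj⟩
  refine or_iff_not_imp_left.2 fun hi => hj ▸ mem_iff_lt_rowLen.1 (hlt _ ?_)
  exact Prod.mk_lt_mk.2 (.inl ⟨by omega, le_rfl⟩)

lemma removable_of_cells_eq_insert (hc : (i, j) ∉ μ) (h : ν.cells = insert (i, j) μ.cells) :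
    i ∈ removableRows ν ∧ j = ν.rowLen i - 1 := by
  have hgt : ∀ d, (i, j) < d → d ∉ ν := fun d hd hdν => by
    rw [← mem_cells, h, mem_insert] at hdν
    exact hc (μ.isLowerSet hd.le ((mem_cells d).1 (hdν.resolve_left hd.ne')))
  have hν : j < ν.rowLen i := mem_iff_lt_rowLen.1 ((mem_cells _).1 (h ▸ mem_insert_self _ _))
  have hrow : ν.rowLen i ≤ j + 1 :=
    not_lt.1 fun h =>
      hgt _ (Prod.mk_lt_mk.2 (.inr ⟨le_rfl, j.lt_succ_self⟩)) (mem_iff_lt_rowLen.2 h)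
  have hbelow : ν.rowLen (i + 1) ≤ j :=
    not_lt.1 fun h =>
      hgt _ (Prod.mk_lt_mk.2 (.inl ⟨i.lt_succ_self, le_rfl⟩)) (mem_iff_lt_rowLen.2 h)
  exact ⟨mem_removableRows.2 (by omega), by omega⟩

def covers (μ : YoungDiagram) : Finset YoungDiagram := (addableRows μ).image μ.addBox

def covered (μ : YoungDiagram) : Finset YoungDiagram := (removableRows μ).image μ.removeBox

lemma mem_covers : ν ∈ covers μ ↔ μ ⋖ ν := by
  refine ⟨fun h => ?_, fun h => ?_⟩
  · obtain ⟨i, hi, rfl⟩ := mem_image.1 h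
    exact covBy_addBox hi
  · obtain ⟨⟨i, j⟩, hc, hν⟩ := exists_cells_eq_insert_of_covBy h
    obtain ⟨hi, rfl⟩ := addable_of_cells_eq_insert hc hν
    exact mem_image.2 ⟨i, hi, YoungDiagram.ext ((cells_addBox hi).trans hν.symm)⟩

lemma mem_covered : ν ∈ covered μ ↔ ν ⋖ μ := by
  refine ⟨fun h => ?_, fun h => ?_⟩
  · obtain ⟨i, hi, rfl⟩ := mem_image.1 h
    exact removeBox_covBy hi
  · obtain ⟨⟨i, j⟩, hc, hμ⟩ := exists_cells_eq_insert_of_covBy h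
    obtain ⟨hi, rfl⟩ := removable_of_cells_eq_insert hc hμ
    refine mem_image.2 ⟨i, hi, YoungDiagram.ext ?_⟩
    rw [cells_removeBox hi, hμ, erase_insert fun h => hc ((mem_cells _).1 h)]

lemma card_covers (μ : YoungDiagram) : #(covers μ) = #(covered μ) + 1 := by
  rw [covers, covered, card_image_of_injOn, card_image_of_injOn, card_addableRows]
  · intro i hi i' hi' h
    have hmem := mk_rowLen_sub_one_mem (mem_coe.1 hi)
    have hcell : (i, μ.rowLen i - 1) ∉ (removeBox μ i').cells := by
      rw [← h, cells_removeBox hi]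
      exact notMem_erase _ _
    rw [cells_removeBox hi', mem_erase, not_and_or, not_not] at hcell
    exact (Prod.mk.inj (hcell.resolve_right (not_not.2 hmem))).1
  · intro i hi i' hi' h
    have hcell : (i, μ.rowLen i) ∈ (addBox μ i').cells := by
      rw [← h, cells_addBox hi]
      exact mem_insert_self _ _
    rw [cells_addBox hi', mem_insert] at hcell
    exact (Prod.mk.inj (hcell.resolve_right (mk_rowLen_notMem μ i))).1

lemma card_covers_inter_covers (h : μ ≠ ν) :
    #(covers μ ∩ covers ν) = #(covered μ ∩ covered ν) :=
  card_inter_eq_card_inter_of_covBy (fun _ _ => mem_covers) (fun _ _ => mem_covered) h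

lemma sum_covers_sum_covered {M : Type*} [AddCommMonoid M] (g : YoungDiagram → M)
    (μ : YoungDiagram) :
    ∑ ν ∈ covers μ, ∑ ρ ∈ covered ν, g ρ = ∑ ν ∈ covered μ, ∑ ρ ∈ covers ν, g ρ + g μ :=
  sum_sum_down_eq_sum_sum_up_add (fun _ _ => mem_covers.trans mem_covered.symm) card_covers
    (fun _ _ => card_covers_inter_covers) g μ

lemma covered_bot : covered ⊥ = ∅ :=
  eq_empty_of_forall_notMem fun _ h => not_covBy_bot (mem_covered.1 h)

lemma oneBoxStep_iff : OneBoxStep μ ν ↔ μ ⋖ ν ∨ ν ⋖ μ := by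
  rw [OneBoxStep, covBy_iff, covBy_iff]

def neighbors (μ : YoungDiagram) : Finset YoungDiagram := covers μ ∪ covered μ

lemma mem_neighbors : ν ∈ neighbors μ ↔ OneBoxStep ν μ := by
  rw [neighbors, mem_union, mem_covers, mem_covered, oneBoxStep_iff, or_comm]

lemma walkCount_neighbors_succ (m : ℕ) (μ : YoungDiagram) :
    walkCount neighbors ⊥ (m + 1) μ =
      ∑ ν ∈ covers μ, walkCount neighbors ⊥ m ν + ∑ ν ∈ covered μ, walkCount neighbors ⊥ m ν :=
  sum_union <| disjoint_left.2 fun _ h₁ h₂ => (mem_covers.1 h₁).lt.asymm (mem_covered.1 h₂).lt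

lemma sum_covers_walkCount_succ_eq (m : ℕ) (μ : YoungDiagram) :
    ∑ ν ∈ covers μ, walkCount neighbors ⊥ (m + 1) ν =
      ∑ ν ∈ covers μ, ∑ ρ ∈ covers ν, walkCount neighbors ⊥ m ρ +
        (∑ ν ∈ covered μ, ∑ ρ ∈ covers ν, walkCount neighbors ⊥ m ρ +
          walkCount neighbors ⊥ m μ) := by
  rw [sum_congr rfl fun ν _ => walkCount_neighbors_succ m ν, sum_add_distrib,
    sum_covers_sum_covered]

theorem sum_covers_walkCount_succ (m : ℕ) (μ : YoungDiagram) :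
    ∑ ν ∈ covers μ, walkCount neighbors ⊥ (m + 1) ν = (m + 1) * walkCount neighbors ⊥ m μ := by
  induction m generalizing μ with
  | zero =>
    have h₀ : ∀ ν, ∑ ρ ∈ covers ν, walkCount neighbors ⊥ 0 ρ = 0 := fun ν =>
      sum_eq_zero fun ρ hρ => if_neg fun h => not_covBy_bot (h ▸ mem_covers.1 hρ)
    simp only [sum_covers_walkCount_succ_eq, h₀, sum_const_zero, zero_add, one_mul]
  | succ m ih =>
    rw [sum_covers_walkCount_succ_eq, sum_congr rfl fun ν _ => ih ν, sum_congr rfl fun ν _ => ih ν,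
      ← mul_sum, ← mul_sum, ← add_assoc, ← mul_add, ← walkCount_neighbors_succ]
    ring

theorem walkCount_neighbors_two_mul (n : ℕ) : walkCount neighbors ⊥ (2 * n) ⊥ = (2 * n - 1)‼ := by
  induction n with
  | zero => simp [walkCount]
  | succ n ih =>
    rw [show 2 * (n + 1) = 2 * n + 1 + 1 by ring, walkCount_neighbors_succ, covered_bot, sum_empty,
      add_zero, sum_covers_walkCount_succ, ih, Nat.add_sub_cancel, Nat.doubleFactorial_add_one]

end YoungDiagram

lemma isOscillating_iff_isWalk {n : ℕ} {mu : Fin (2 * n + 1) → YoungDiagram} :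
    IsOscillating n mu ↔ IsWalk OneBoxStep ⊥ ⊥ mu :=
  and_congr_right' <| and_congr_right' ⟨fun h i => h i i.2, fun h i hi => h ⟨i, hi⟩⟩

/-- Perfect matchings of `{1,…,2n}` are in bijection with oscillating tableaux of
length `2n`. -/
theorem matchings_equiv_oscillating_tableaux (n : ℕ) :
    Nonempty (
      {P : Finpartition (Finset.univ : Finset (Fin (2 * n))) //
        ∀ b ∈ P.parts, b.card = 2} ≃
      {mu : Fin (2 * n + 1) → YoungDiagram // IsOscillating n mu}) := by
  obtain ⟨walks⟩ := nonempty_walk_equiv_fin (fun _ _ => YoungDiagram.mem_neighbors) ⊥ (2 * n) ⊥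
  rw [YoungDiagram.walkCount_neighbors_two_mul] at walks
  have hcard : Nat.card (PerfectMatching (univ : Finset (Fin (2 * n)))) = (2 * n - 1)‼ :=
    card_perfectMatching (by rw [card_univ, Fintype.card_fin])
  exact ⟨(Finite.equivFin _).trans <| (finCongr hcard).trans <|
    walks.symm.trans (Equiv.subtypeEquivRight fun _ => isOscillating_iff_isWalk).symm⟩
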